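/- Let A be an associative unital algebra over ℂ with a comultiplication Δ, and let φ be a left integral on A. For all a, b, c ∈ A, the element x ⊗ c, where x = (id ⊗ φ)(Δ(a)(1 ⊗ b)), belongs to the range of the linear map T₁ : A ⊗ A → A ⊗ A determined by T₁(a ⊗ b) = Δ(a)(1 ⊗ b); explicitly, x ⊗ c = T₁(y) where y = (id ⊗ id ⊗ φ)(Δ₁₃(a)·Δ₂₃(b)·(1 ⊗ c ⊗ 1)), with Δ₂₃(b) = 1 ⊗ Δ(b) and Δ₁₃(a) = (1 ⊗ σ)(Δ(a) ⊗ 1), σ being the flip map on A ⊗ A. -/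
import Mathlib


open TensorProduct

set_option synthInstance.maxHeartbeats 1000000
set_option maxHeartbeats 1000000

noncomputable section

variable {A : Type*} [Ring A] [Algebra ℂ A]

/-- The slice map `id ⊗ ω : A ⊗ A → A`. -/
def sliceR (ω : A →ₗ[ℂ] ℂ) : A ⊗[ℂ] A →ₗ[ℂ] A :=
  (TensorProduct.rid ℂ A).toLinearMap ∘ₗ TensorProduct.map LinearMap.id ω

/-- The slice map `ω ⊗ id : A ⊗ A → A`. -/
def sliceL (ω : A →ₗ[ℂ] ℂ) : A ⊗[ℂ] A →ₗ[ℂ] A :=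
  (TensorProduct.lid ℂ A).toLinearMap ∘ₗ TensorProduct.map ω LinearMap.id

/-- Coassociativity of a comultiplication `Δ : A → A ⊗ A`:
`(Δ ⊗ id) ∘ Δ = (id ⊗ Δ) ∘ Δ` (up to the associator). -/
def IsCoassoc (Δ : A →ₐ[ℂ] A ⊗[ℂ] A) : Prop :=
  ∀ a : A,
    TensorProduct.assoc ℂ A A A (TensorProduct.map Δ.toLinearMap LinearMap.id (Δ a)) =
      TensorProduct.map LinearMap.id Δ.toLinearMap (Δ a)

/-- A left integral: a nonzero functional with `(id ⊗ φ)(Δ a) = φ(a)·1` for all `a`. -/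
def IsLeftIntegral (Δ : A →ₐ[ℂ] A ⊗[ℂ] A) (φ : A →ₗ[ℂ] ℂ) : Prop :=
  φ ≠ 0 ∧ ∀ a : A, sliceR φ (Δ a) = φ a • (1 : A)

/-- A right integral: a nonzero functional with `(ψ ⊗ id)(Δ a) = ψ(a)·1` for all `a`. -/
def IsRightIntegral (Δ : A →ₐ[ℂ] A ⊗[ℂ] A) (ψ : A →ₗ[ℂ] ℂ) : Prop :=
  ψ ≠ 0 ∧ ∀ a : A, sliceL ψ (Δ a) = ψ a • (1 : A)

/-- A faithful functional: the bilinear form `(a, b) ↦ ω(ab)` is non-degenerate. -/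
def IsFaithful (ω : A →ₗ[ℂ] ℂ) : Prop :=
  (∀ b : A, (∀ a : A, ω (a * b) = 0) → b = 0) ∧
  (∀ b : A, (∀ a : A, ω (b * a) = 0) → b = 0)

/-- The left leg of an element `x ∈ A ⊗ A`: the span of `{(id ⊗ ω)(x) : ω ∈ A*}`. -/
def leftLegOf (x : A ⊗[ℂ] A) : Submodule ℂ A :=
  Submodule.span ℂ {y : A | ∃ ω : A →ₗ[ℂ] ℂ, y = sliceR ω x}

/-- The right leg of an element `x ∈ A ⊗ A`: the span of `{(ω ⊗ id)(x) : ω ∈ A*}`. -/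
def rightLegOf (x : A ⊗[ℂ] A) : Submodule ℂ A :=
  Submodule.span ℂ {y : A | ∃ ω : A →ₗ[ℂ] ℂ, y = sliceL ω x}

/-- The left leg of `Δ`: the span of `{(id ⊗ ω)(Δ a) : a ∈ A, ω ∈ A*}`. -/
def leftLeg (Δ : A →ₐ[ℂ] A ⊗[ℂ] A) : Submodule ℂ A :=
  Submodule.span ℂ {y : A | ∃ (a : A) (ω : A →ₗ[ℂ] ℂ), y = sliceR ω (Δ a)}

/-- The right leg of `Δ`: the span of `{(ω ⊗ id)(Δ a) : a ∈ A, ω ∈ A*}`. -/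
def rightLeg (Δ : A →ₐ[ℂ] A ⊗[ℂ] A) : Submodule ℂ A :=
  Submodule.span ℂ {y : A | ∃ (a : A) (ω : A →ₗ[ℂ] ℂ), y = sliceL ω (Δ a)}

/-- A comultiplication is full if both of its legs are all of `A`. -/
def IsFull (Δ : A →ₐ[ℂ] A ⊗[ℂ] A) : Prop :=
  leftLeg Δ = ⊤ ∧ rightLeg Δ = ⊤

/-- The linear map `T₁` with `T₁ (a ⊗ b) = Δ(a) * (1 ⊗ b)`. -/
def T1 (Δ : A →ₐ[ℂ] A ⊗[ℂ] A) : A ⊗[ℂ] A →ₗ[ℂ] A ⊗[ℂ] A :=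
  LinearMap.mul' ℂ (A ⊗[ℂ] A) ∘ₗ
    TensorProduct.map Δ.toLinearMap (TensorProduct.mk ℂ A A 1)

/-- The linear map `T₁'` with `T₁' (a ⊗ b) = Δ(a) * (b ⊗ 1)`. -/
def T1' (Δ : A →ₐ[ℂ] A ⊗[ℂ] A) : A ⊗[ℂ] A →ₗ[ℂ] A ⊗[ℂ] A :=
  LinearMap.mul' ℂ (A ⊗[ℂ] A) ∘ₗ
    TensorProduct.map Δ.toLinearMap ((TensorProduct.mk ℂ A A).flip 1)

/-- The linear map `T₂` with `T₂ (a ⊗ b) = (a ⊗ 1) * Δ(b)`. -/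
def T2 (Δ : A →ₐ[ℂ] A ⊗[ℂ] A) : A ⊗[ℂ] A →ₗ[ℂ] A ⊗[ℂ] A :=
  LinearMap.mul' ℂ (A ⊗[ℂ] A) ∘ₗ
    TensorProduct.map ((TensorProduct.mk ℂ A A).flip 1) Δ.toLinearMap

/-- The linear map `T₂'` with `T₂' (a ⊗ b) = (1 ⊗ a) * Δ(b)`. -/
def T2' (Δ : A →ₐ[ℂ] A ⊗[ℂ] A) : A ⊗[ℂ] A →ₗ[ℂ] A ⊗[ℂ] A :=
  LinearMap.mul' ℂ (A ⊗[ℂ] A) ∘ₗ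
    TensorProduct.map (TensorProduct.mk ℂ A A 1) Δ.toLinearMap

/-- A left cointegral: a nonzero element `h` with `Δ(a)(1 ⊗ h) = a ⊗ h` for all `a`. -/
def IsLeftCointegral (Δ : A →ₐ[ℂ] A ⊗[ℂ] A) (h : A) : Prop :=
  h ≠ 0 ∧ ∀ a : A, Δ a * ((1 : A) ⊗ₜ[ℂ] h) = a ⊗ₜ[ℂ] h

/-- A right cointegral: a nonzero element `k` with `(k ⊗ 1)Δ(a) = k ⊗ a` for all `a`. -/
def IsRightCointegral (Δ : A →ₐ[ℂ] A ⊗[ℂ] A) (k : A) : Prop :=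
  k ≠ 0 ∧ ∀ a : A, (k ⊗ₜ[ℂ] (1 : A)) * Δ a = k ⊗ₜ[ℂ] a

/-- `Δ₁₃(a) = (1 ⊗ σ)(Δ(a) ⊗ 1)`, viewed in `A ⊗ (A ⊗ A)`. -/
def delta13 (Δ : A →ₐ[ℂ] A ⊗[ℂ] A) (a : A) : A ⊗[ℂ] (A ⊗[ℂ] A) :=
  TensorProduct.map LinearMap.id (TensorProduct.comm ℂ A A).toLinearMap
    (TensorProduct.assoc ℂ A A A (Δ a ⊗ₜ[ℂ] (1 : A)))


section Aux

variable (Δ : A →ₐ[ℂ] A ⊗[ℂ] A) (φ : A →ₗ[ℂ] ℂ)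

lemma sliceR_tmul (ω : A →ₗ[ℂ] ℂ) (x y : A) : sliceR ω (x ⊗ₜ[ℂ] y) = ω y • x := by
  simp [sliceR]

lemma sliceR_mul_left (q : A) (z : A ⊗[ℂ] A) :
    sliceR φ ((q ⊗ₜ[ℂ] (1 : A)) * z) = q * sliceR φ z := by
  induction z using TensorProduct.induction_on with
  | zero => simp
  | tmul x y =>
      simp [Algebra.TensorProduct.tmul_mul_tmul, sliceR_tmul, mul_smul_comm]
  | add x y hx hy => simp [mul_add, hx, hy]

lemma sliceR_mul_right (c : A) (z : A ⊗[ℂ] A) :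
    sliceR φ (z * (c ⊗ₜ[ℂ] (1 : A))) = sliceR φ z * c := by
  induction z using TensorProduct.induction_on with
  | zero => simp
  | tmul x y =>
      simp [Algebra.TensorProduct.tmul_mul_tmul, sliceR_tmul, smul_mul_assoc]
  | add x y hx hy => simp [add_mul, hx, hy]

lemma T1_tmul (x y : A) : T1 Δ (x ⊗ₜ[ℂ] y) = Δ x * ((1 : A) ⊗ₜ[ℂ] y) := by
  simp [T1]

/-- The auxiliary map `H = id ⊗ (φ ∘ (·* N))`. -/
def auxH (N : A ⊗[ℂ] A) : A ⊗[ℂ] (A ⊗[ℂ] A) →ₗ[ℂ] A ⊗[ℂ] A :=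
  TensorProduct.map LinearMap.id ((sliceR φ) ∘ₗ LinearMap.mulRight ℂ N)

lemma auxH_tmul (N : A ⊗[ℂ] A) (p : A) (z : A ⊗[ℂ] A) :
    auxH φ N (p ⊗ₜ[ℂ] z) = p ⊗ₜ[ℂ] sliceR φ (z * N) := by
  simp [auxH]

lemma auxH_assoc (N : A ⊗[ℂ] A) (u : A ⊗[ℂ] A) (y : A) :
    auxH φ N (TensorProduct.assoc ℂ A A A (u ⊗ₜ[ℂ] y)) =
      u * ((1 : A) ⊗ₜ[ℂ] sliceR φ (((1 : A) ⊗ₜ[ℂ] y) * N)) := by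
  induction u using TensorProduct.induction_on with
  | zero => simp only [TensorProduct.zero_tmul, LinearEquiv.map_zero, map_zero, zero_mul]
  | tmul p q =>
      rw [TensorProduct.assoc_tmul, auxH_tmul,
        show (q ⊗ₜ[ℂ] y) * N = (q ⊗ₜ[ℂ] (1 : A)) * (((1 : A) ⊗ₜ[ℂ] y) * N) by
          rw [← mul_assoc, Algebra.TensorProduct.tmul_mul_tmul, mul_one, one_mul],
        sliceR_mul_left, Algebra.TensorProduct.tmul_mul_tmul, mul_one]
  | add x y hx hy => simp [add_tmul, add_mul, hx, hy]

lemma key1 (N : A ⊗[ℂ] A) (w : A ⊗[ℂ] A) :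
    T1 Δ (TensorProduct.map LinearMap.id (sliceR φ)
        ((TensorProduct.map LinearMap.id (TensorProduct.comm ℂ A A).toLinearMap
          (TensorProduct.assoc ℂ A A A (w ⊗ₜ[ℂ] (1 : A)))) * ((1 : A) ⊗ₜ[ℂ] N))) =
      auxH φ N (TensorProduct.assoc ℂ A A A
        (TensorProduct.map Δ.toLinearMap LinearMap.id w)) := by
  induction w using TensorProduct.induction_on with
  | zero => simp only [TensorProduct.zero_tmul, LinearEquiv.map_zero, map_zero, zero_mul]
  | tmul x y =>
      rw [TensorProduct.map_tmul, TensorProduct.assoc_tmul, auxH_assoc]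
      simp only [TensorProduct.assoc_tmul, TensorProduct.map_tmul, LinearMap.id_coe, id_eq,
        LinearEquiv.coe_coe, TensorProduct.comm_tmul, Algebra.TensorProduct.tmul_mul_tmul,
        mul_one, T1_tmul, AlgHom.toLinearMap_apply]
  | add x y hx hy =>
      simp only [add_tmul, map_add, add_mul, hx, hy]

lemma key2 (hφ : IsLeftIntegral Δ φ) (b c : A) (w : A ⊗[ℂ] A) :
    auxH φ (Δ b * (c ⊗ₜ[ℂ] (1 : A)))
        (TensorProduct.map LinearMap.id Δ.toLinearMap w) =
      sliceR φ (w * ((1 : A) ⊗ₜ[ℂ] b)) ⊗ₜ[ℂ] c := by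
  induction w using TensorProduct.induction_on with
  | zero => simp
  | tmul x y =>
      rw [TensorProduct.map_tmul, LinearMap.id_coe, id_eq, auxH_tmul, ← mul_assoc,
        show (Δ.toLinearMap y : A ⊗[ℂ] A) * Δ b = Δ (y * b) by
          simp [map_mul],
        sliceR_mul_right, hφ.2, Algebra.TensorProduct.tmul_mul_tmul, mul_one,
        sliceR_tmul]
      rw [smul_mul_assoc, one_mul, TensorProduct.smul_tmul, TensorProduct.tmul_smul]
  | add x y hx hy => simp only [map_add, add_mul, hx, hy, TensorProduct.add_tmul]

end Aux

/-- For a left integral `φ`, the element `x ⊗ c` with `x = (id ⊗ φ)(Δ(a)(1 ⊗ b))` lies in the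
range of `T₁`; explicitly `x ⊗ c = T₁((id ⊗ id ⊗ φ)(Δ₁₃(a)Δ₂₃(b)(1 ⊗ c ⊗ 1)))`. -/
theorem element_in_range_T1
    (Δ : A →ₐ[ℂ] A ⊗[ℂ] A) (hΔ : IsCoassoc Δ)
    (φ : A →ₗ[ℂ] ℂ) (hφ : IsLeftIntegral Δ φ) (a b c : A) :
    sliceR φ (Δ a * ((1 : A) ⊗ₜ[ℂ] b)) ⊗ₜ[ℂ] c =
      T1 Δ (TensorProduct.map LinearMap.id (sliceR φ)
        (delta13 Δ a * ((1 : A) ⊗ₜ[ℂ] Δ b) * ((1 : A) ⊗ₜ[ℂ] (c ⊗ₜ[ℂ] (1 : A))))) ∧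
    sliceR φ (Δ a * ((1 : A) ⊗ₜ[ℂ] b)) ⊗ₜ[ℂ] c ∈ LinearMap.range (T1 Δ) := by
  have key : sliceR φ (Δ a * ((1 : A) ⊗ₜ[ℂ] b)) ⊗ₜ[ℂ] c =
      T1 Δ (TensorProduct.map LinearMap.id (sliceR φ)
        (delta13 Δ a * ((1 : A) ⊗ₜ[ℂ] Δ b) * ((1 : A) ⊗ₜ[ℂ] (c ⊗ₜ[ℂ] (1 : A))))) := by
    rw [mul_assoc, Algebra.TensorProduct.tmul_mul_tmul, one_mul]
    rw [delta13, key1 Δ φ (Δ b * (c ⊗ₜ[ℂ] (1 : A))) (Δ a), hΔ a, key2 Δ φ hφ b c (Δ a)]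
  exact ⟨key, key ▸ ⟨_, rfl⟩⟩
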